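/- Let (C, E, s) be an n-exangulated category, F : C → A an additive functor to an abelian category A that is half exact (i.e., for every distinguished n-exangle X₀ → X₁ → ⋯ → X_{n+1} ⇢, the sequence FX₀ → FX₁ → ⋯ → FX_{n+1} is exact in A). Define E^F_R(X_{n+1}, X₀) ⊆ E(X_{n+1}, X₀) to consist of those δ such that for some (equivalently any) distinguished n-exangle realizing δ, the image F(f_n) of the last morphism f_n : Xₙ → X_{n+1} is an epimorphism in A. Then E^F_R is an additive subfunctor of E. -/

import Mathlib

open CategoryTheory CategoryTheory.Limits Opposite

universe v u v₂ u₂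

/-- A candidate `n`-exangle: an `(n+2)`-term sequence of composable morphisms in `C`,
in degrees `0, 1, …, n+1`. -/
structure NExCplx (C : Type u) [Category.{v} C] (n : ℕ) where
  X : Fin (n + 2) → C
  d : ∀ i : Fin (n + 1), X i.castSucc ⟶ X i.succ

namespace NEx

variable {C : Type u} [Category.{v} C]

/-- The degree `0` index. -/
abbrev fin0 (n : ℕ) : Fin (n + 2) := ⟨0, by omega⟩

/-- The degree `n+1` index. -/
abbrev finLast (n : ℕ) : Fin (n + 2) := Fin.last (n + 1)

/-- The group of `E`-extensions attached to a candidate `n`-exangle: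
`E(X_{n+1}, X₀)`. -/
abbrev NEext (E : Cᵒᵖ ⥤ C ⥤ AddCommGrpCat.{v}) {n : ℕ} (Z : NExCplx C n) : Type v :=
  (E.obj (op (Z.X (finLast n)))).obj (Z.X (fin0 n))

/-- Pushforward `a_*δ` of an extension `δ ∈ E(X, A)` along `a : A ⟶ A'`. -/
def pushf (E : Cᵒᵖ ⥤ C ⥤ AddCommGrpCat.{v}) {A A' X : C} (a : A ⟶ A')
    (δ : (E.obj (op X)).obj A) : (E.obj (op X)).obj A' :=
  ((E.obj (op X)).map a) δ

/-- Pullback `c^*δ` of an extension `δ ∈ E(X, A)` along `c : X' ⟶ X`. -/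
def pullb (E : Cᵒᵖ ⥤ C ⥤ AddCommGrpCat.{v}) {A X X' : C} (c : X' ⟶ X)
    (δ : (E.obj (op X)).obj A) : (E.obj (op X')).obj A :=
  ((E.map c.op).app A) δ

/-- Transport of an extension along equalities of its end objects. -/
def extCast (E : Cᵒᵖ ⥤ C ⥤ AddCommGrpCat.{v}) {A A' X X' : C} (hA : A = A') (hX : X = X')
    (δ : (E.obj (op X)).obj A) : (E.obj (op X')).obj A' :=
  pullb E (eqToHom hX.symm) (pushf E (eqToHom hA) δ)

/-- A morphism of (candidate) `n`-exangles `⟨Z, δ⟩ → ⟨W, ρ⟩`. -/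
structure ExangleMor (E : Cᵒᵖ ⥤ C ⥤ AddCommGrpCat.{v}) {n : ℕ} (Z W : NExCplx C n)
    (δ : NEext E Z) (ρ : NEext E W) where
  app : ∀ i : Fin (n + 2), Z.X i ⟶ W.X i
  comm : ∀ i : Fin (n + 1), Z.d i ≫ app i.succ = app i.castSucc ≫ W.d i
  compat : pushf E (app (fin0 n)) δ = pullb E (app (finLast n)) ρ

variable [Preadditive C] [HasBinaryBiproducts C]

/-- Objects of the total complex (mapping cone) of a ladder with rows `A`, `B`. -/
noncomputable def coneX (n : ℕ) (A B : Fin (n + 1) → C) (i : Fin (n + 2)) : C :=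
  if _ : i.val = 0 then A ⟨0, Nat.succ_pos n⟩
  else if _ : i.val ≤ n then A ⟨i.val, by omega⟩ ⊞ B ⟨i.val - 1, by omega⟩
  else B ⟨n, Nat.lt_succ_self n⟩

lemma coneX_zero (n : ℕ) (A B : Fin (n + 1) → C) :
    coneX n A B (fin0 n) = A ⟨0, Nat.succ_pos n⟩ := by
  simp [coneX, fin0]

lemma coneX_mid (n : ℕ) (A B : Fin (n + 1) → C) (i : Fin (n + 2))
    (h0 : i.val ≠ 0) (h1 : i.val ≤ n) :
    coneX n A B i = (A ⟨i.val, by omega⟩ ⊞ B ⟨i.val - 1, by omega⟩) := by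
  rw [coneX, dif_neg h0, dif_pos h1]

lemma coneX_last (n : ℕ) (A B : Fin (n + 1) → C) :
    coneX n A B (finLast n) = B ⟨n, Nat.lt_succ_self n⟩ := by
  rw [coneX, dif_neg (by simp [finLast]), dif_neg (by simp [finLast])]

/-- Differentials of the mapping cone of a ladder:
`d₀ = (-f₀, φ₀)ᵀ`, `dᵢ = [-fᵢ, 0; φᵢ, g_{i-1}]`, `dₙ = (φₙ, g_{n-1})`. -/
noncomputable def coneD (n : ℕ) (A B : Fin (n + 1) → C)
    (f : ∀ i : Fin n, A i.castSucc ⟶ A i.succ)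
    (g : ∀ i : Fin n, B i.castSucc ⟶ B i.succ)
    (φ : ∀ i : Fin (n + 1), A i ⟶ B i)
    (i : Fin (n + 1)) : coneX n A B i.castSucc ⟶ coneX n A B i.succ :=
  if h0 : i.val = 0 then
    if hn : n = 0 then
      eqToHom (show coneX n A B i.castSucc = A ⟨0, Nat.succ_pos n⟩ by
          simp [coneX, h0]) ≫
        φ ⟨0, Nat.succ_pos n⟩ ≫
        eqToHom (show B ⟨0, Nat.succ_pos n⟩ = coneX n A B i.succ by
          subst hn
          rw [coneX, dif_neg (by simp only [Fin.val_succ]; omega),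
            dif_neg (by simp only [Fin.val_succ]; omega)])
    else
      eqToHom (show coneX n A B i.castSucc = A ⟨i.val, i.isLt⟩ by
          rw [coneX, dif_pos (show (i.castSucc).val = 0 from h0)]
          exact congrArg A (Fin.ext h0.symm)) ≫
        biprod.lift (-(f ⟨i.val, by omega⟩)) (φ ⟨i.val, i.isLt⟩) ≫
        eqToHom (show (A ⟨i.val + 1, by omega⟩ ⊞ B ⟨i.val + 1 - 1, by omega⟩ : C)
            = coneX n A B i.succ by
          rw [coneX, dif_neg (by simp only [Fin.val_succ]; omega),
            dif_pos (by simp only [Fin.val_succ]; omega)]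
          rfl)
  else if hv : i.val < n then
    eqToHom (show coneX n A B i.castSucc
          = (A ⟨i.val, i.isLt⟩ ⊞ B ⟨i.val - 1, by omega⟩) by
        rw [coneX, dif_neg (show ¬(i.castSucc).val = 0 from h0),
          dif_pos (show (i.castSucc).val ≤ n by simp only [Fin.coe_castSucc]; omega)]
        rfl) ≫
      biprod.lift (biprod.desc (-(f ⟨i.val, hv⟩)) 0)
        (biprod.desc (φ ⟨i.val, i.isLt⟩)
          (g ⟨i.val - 1, by omega⟩ ≫
            eqToHom (congrArg B (Fin.ext (show i.val - 1 + 1 = i.val by omega))))) ≫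
      eqToHom (show (A ⟨i.val + 1, by omega⟩ ⊞ B ⟨i.val + 1 - 1, by omega⟩ : C)
          = coneX n A B i.succ by
        rw [coneX, dif_neg (by simp only [Fin.val_succ]; omega),
          dif_pos (by simp only [Fin.val_succ]; omega)]
        rfl)
  else
    eqToHom (show coneX n A B i.castSucc
          = (A ⟨i.val, i.isLt⟩ ⊞ B ⟨i.val - 1, by have := i.isLt; omega⟩) by
        rw [coneX, dif_neg (show ¬(i.castSucc).val = 0 from h0),
          dif_pos (show (i.castSucc).val ≤ n by
            simp only [Fin.coe_castSucc]; have := i.isLt; omega)]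
        rfl) ≫
      biprod.desc (φ ⟨i.val, i.isLt⟩)
        (g ⟨i.val - 1, by have := i.isLt; omega⟩ ≫
          eqToHom (congrArg B (Fin.ext (show i.val - 1 + 1 = i.val by omega)))) ≫
      eqToHom (show B ⟨i.val, i.isLt⟩ = coneX n A B i.succ by
        rw [coneX, dif_neg (by simp only [Fin.val_succ]; omega),
          dif_neg (by simp only [Fin.val_succ]; have := i.isLt; omega)]
        exact congrArg B (Fin.ext (show (i.val : ℕ) = n by have := i.isLt; omega)))

/-- The mapping cone (total complex) of a ladder, as a candidate `n`-exangle. -/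
noncomputable def coneCplx (n : ℕ) (A B : Fin (n + 1) → C)
    (f : ∀ i : Fin n, A i.castSucc ⟶ A i.succ)
    (g : ∀ i : Fin n, B i.castSucc ⟶ B i.succ)
    (φ : ∀ i : Fin (n + 1), A i ⟶ B i) : NExCplx C n :=
  ⟨coneX n A B, coneD n A B f g φ⟩

/-- Objects of the total complex (mapping cocone) of a ladder with rows `A`, `B`. -/
noncomputable def coconeX (n : ℕ) (A B : Fin (n + 1) → C) (i : Fin (n + 2)) : C :=
  if _ : i.val = 0 then A ⟨0, Nat.succ_pos n⟩
  else if _ : i.val ≤ n then B ⟨i.val - 1, by omega⟩ ⊞ A ⟨i.val, by omega⟩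
  else B ⟨n, Nat.lt_succ_self n⟩

/-- Differentials of the mapping cocone of a ladder:
`d₀ = (φ₀, -f₀)ᵀ`, `dᵢ = [g_{i-1}, φᵢ; 0, -fᵢ]`, `dₙ = (g_{n-1}, φₙ)`. -/
noncomputable def coconeD (n : ℕ) (A B : Fin (n + 1) → C)
    (f : ∀ i : Fin n, A i.castSucc ⟶ A i.succ)
    (g : ∀ i : Fin n, B i.castSucc ⟶ B i.succ)
    (φ : ∀ i : Fin (n + 1), A i ⟶ B i)
    (i : Fin (n + 1)) : coconeX n A B i.castSucc ⟶ coconeX n A B i.succ :=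
  if h0 : i.val = 0 then
    if hn : n = 0 then
      eqToHom (show coconeX n A B i.castSucc = A ⟨0, Nat.succ_pos n⟩ by
          simp [coconeX, h0]) ≫
        φ ⟨0, Nat.succ_pos n⟩ ≫
        eqToHom (show B ⟨0, Nat.succ_pos n⟩ = coconeX n A B i.succ by
          subst hn
          rw [coconeX, dif_neg (by simp only [Fin.val_succ]; omega),
            dif_neg (by simp only [Fin.val_succ]; omega)])
    else
      eqToHom (show coconeX n A B i.castSucc = A ⟨i.val, i.isLt⟩ by
          rw [coconeX, dif_pos (show (i.castSucc).val = 0 from h0)]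
          exact congrArg A (Fin.ext h0.symm)) ≫
        biprod.lift (φ ⟨i.val, i.isLt⟩) (-(f ⟨i.val, by omega⟩)) ≫
        eqToHom (show (B ⟨i.val + 1 - 1, by omega⟩ ⊞ A ⟨i.val + 1, by omega⟩ : C)
            = coconeX n A B i.succ by
          rw [coconeX, dif_neg (by simp only [Fin.val_succ]; omega),
            dif_pos (by simp only [Fin.val_succ]; omega)]
          rfl)
  else if hv : i.val < n then
    eqToHom (show coconeX n A B i.castSucc
          = (B ⟨i.val - 1, by omega⟩ ⊞ A ⟨i.val, i.isLt⟩) by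
        rw [coconeX, dif_neg (show ¬(i.castSucc).val = 0 from h0),
          dif_pos (show (i.castSucc).val ≤ n by simp only [Fin.coe_castSucc]; omega)]
        rfl) ≫
      biprod.lift
        (biprod.desc (g ⟨i.val - 1, by omega⟩ ≫
            eqToHom (congrArg B (Fin.ext (show i.val - 1 + 1 = i.val by omega))))
          (φ ⟨i.val, i.isLt⟩))
        (biprod.desc 0 (-(f ⟨i.val, hv⟩))) ≫
      eqToHom (show (B ⟨i.val + 1 - 1, by omega⟩ ⊞ A ⟨i.val + 1, by omega⟩ : C)
          = coconeX n A B i.succ by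
        rw [coconeX, dif_neg (by simp only [Fin.val_succ]; omega),
          dif_pos (by simp only [Fin.val_succ]; omega)]
        rfl)
  else
    eqToHom (show coconeX n A B i.castSucc
          = (B ⟨i.val - 1, by have := i.isLt; omega⟩ ⊞ A ⟨i.val, i.isLt⟩) by
        rw [coconeX, dif_neg (show ¬(i.castSucc).val = 0 from h0),
          dif_pos (show (i.castSucc).val ≤ n by
            simp only [Fin.coe_castSucc]; have := i.isLt; omega)]
        rfl) ≫
      biprod.desc
        (g ⟨i.val - 1, by have := i.isLt; omega⟩ ≫
          eqToHom (congrArg B (Fin.ext (show i.val - 1 + 1 = i.val by omega))))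
        (φ ⟨i.val, i.isLt⟩) ≫
      eqToHom (show B ⟨i.val, i.isLt⟩ = coconeX n A B i.succ by
        rw [coconeX, dif_neg (by simp only [Fin.val_succ]; omega),
          dif_neg (by simp only [Fin.val_succ]; have := i.isLt; omega)]
        exact congrArg B (Fin.ext (show (i.val : ℕ) = n by have := i.isLt; omega)))

noncomputable def coconeCplx (n : ℕ) (A B : Fin (n + 1) → C)
    (f : ∀ i : Fin n, A i.castSucc ⟶ A i.succ)
    (g : ∀ i : Fin n, B i.castSucc ⟶ B i.succ)
    (φ : ∀ i : Fin (n + 1), A i ⟶ B i) : NExCplx C n :=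
  ⟨coconeX n A B, coconeD n A B f g φ⟩

/-- Differentials of the total complex in the second sign convention:
`d₀ = (-f₀, φ₀)ᵀ`, `dᵢ = [fᵢ, 0; (-1)^{i+1}φᵢ, g_{i-1}]`,
`dₙ = ((-1)^{n+1}φₙ, g_{n-1})`. -/
noncomputable def coneD' (n : ℕ) (A B : Fin (n + 1) → C)
    (f : ∀ i : Fin n, A i.castSucc ⟶ A i.succ)
    (g : ∀ i : Fin n, B i.castSucc ⟶ B i.succ)
    (φ : ∀ i : Fin (n + 1), A i ⟶ B i)
    (i : Fin (n + 1)) : coneX n A B i.castSucc ⟶ coneX n A B i.succ :=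
  if h0 : i.val = 0 then
    if hn : n = 0 then
      eqToHom (show coneX n A B i.castSucc = A ⟨0, Nat.succ_pos n⟩ by
          simp [coneX, h0]) ≫
        φ ⟨0, Nat.succ_pos n⟩ ≫
        eqToHom (show B ⟨0, Nat.succ_pos n⟩ = coneX n A B i.succ by
          subst hn
          rw [coneX, dif_neg (by simp only [Fin.val_succ]; omega),
            dif_neg (by simp only [Fin.val_succ]; omega)])
    else
      eqToHom (show coneX n A B i.castSucc = A ⟨i.val, i.isLt⟩ by
          rw [coneX, dif_pos (show (i.castSucc).val = 0 from h0)]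
          exact congrArg A (Fin.ext h0.symm)) ≫
        biprod.lift (-(f ⟨i.val, by omega⟩)) (φ ⟨i.val, i.isLt⟩) ≫
        eqToHom (show (A ⟨i.val + 1, by omega⟩ ⊞ B ⟨i.val + 1 - 1, by omega⟩ : C)
            = coneX n A B i.succ by
          rw [coneX, dif_neg (by simp only [Fin.val_succ]; omega),
            dif_pos (by simp only [Fin.val_succ]; omega)]
          rfl)
  else if hv : i.val < n then
    eqToHom (show coneX n A B i.castSucc
          = (A ⟨i.val, i.isLt⟩ ⊞ B ⟨i.val - 1, by omega⟩) by
        rw [coneX, dif_neg (show ¬(i.castSucc).val = 0 from h0),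
          dif_pos (show (i.castSucc).val ≤ n by simp only [Fin.coe_castSucc]; omega)]
        rfl) ≫
      biprod.lift (biprod.desc (f ⟨i.val, hv⟩) 0)
        (biprod.desc (((-1 : ℤ) ^ (i.val + 1)) • φ ⟨i.val, i.isLt⟩)
          (g ⟨i.val - 1, by omega⟩ ≫
            eqToHom (congrArg B (Fin.ext (show i.val - 1 + 1 = i.val by omega))))) ≫
      eqToHom (show (A ⟨i.val + 1, by omega⟩ ⊞ B ⟨i.val + 1 - 1, by omega⟩ : C)
          = coneX n A B i.succ by
        rw [coneX, dif_neg (by simp only [Fin.val_succ]; omega),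
          dif_pos (by simp only [Fin.val_succ]; omega)]
        rfl)
  else
    eqToHom (show coneX n A B i.castSucc
          = (A ⟨i.val, i.isLt⟩ ⊞ B ⟨i.val - 1, by have := i.isLt; omega⟩) by
        rw [coneX, dif_neg (show ¬(i.castSucc).val = 0 from h0),
          dif_pos (show (i.castSucc).val ≤ n by
            simp only [Fin.coe_castSucc]; have := i.isLt; omega)]
        rfl) ≫
      biprod.desc (((-1 : ℤ) ^ (i.val + 1)) • φ ⟨i.val, i.isLt⟩)
        (g ⟨i.val - 1, by have := i.isLt; omega⟩ ≫
          eqToHom (congrArg B (Fin.ext (show i.val - 1 + 1 = i.val by omega)))) ≫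
      eqToHom (show B ⟨i.val, i.isLt⟩ = coneX n A B i.succ by
        rw [coneX, dif_neg (by simp only [Fin.val_succ]; omega),
          dif_neg (by simp only [Fin.val_succ]; have := i.isLt; omega)]
        exact congrArg B (Fin.ext (show (i.val : ℕ) = n by have := i.isLt; omega)))

lemma coconeX_zero (n : ℕ) (A B : Fin (n + 1) → C) :
    coconeX n A B (fin0 n) = A ⟨0, Nat.succ_pos n⟩ := by
  simp [coconeX, fin0]

lemma coconeX_last (n : ℕ) (A B : Fin (n + 1) → C) :
    coconeX n A B (finLast n) = B ⟨n, Nat.lt_succ_self n⟩ := by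
  rw [coconeX, dif_neg (by simp [finLast]), dif_neg (by simp [finLast])]

variable [HasZeroObject C]

/-- A ladder (with rows `A`, `B`, horizontal maps `f`, `g` and vertical maps `φ`)
is a homotopy cartesian diagram with differential `dl` if its total complex
(mapping cone) together with `dl` is a distinguished `n`-exangle. -/
noncomputable def IsHomotopyCartesian (n : ℕ) (E : Cᵒᵖ ⥤ C ⥤ AddCommGrpCat.{v})
    (dist : ∀ Z : NExCplx C n, NEext E Z → Prop)
    (A B : Fin (n + 1) → C)
    (f : ∀ i : Fin n, A i.castSucc ⟶ A i.succ)
    (g : ∀ i : Fin n, B i.castSucc ⟶ B i.succ)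
    (φ : ∀ i : Fin (n + 1), A i ⟶ B i)
    (dl : (E.obj (op (B ⟨n, Nat.lt_succ_self n⟩))).obj (A ⟨0, Nat.succ_pos n⟩)) : Prop :=
  dist (coneCplx n A B f g φ)
    (extCast E (coneX_zero n A B).symm (coneX_last n A B).symm dl)

/-- The dual notion, using the mapping cocone. -/
noncomputable def IsCoHomotopyCartesian (n : ℕ) (E : Cᵒᵖ ⥤ C ⥤ AddCommGrpCat.{v})
    (dist : ∀ Z : NExCplx C n, NEext E Z → Prop)
    (A B : Fin (n + 1) → C)
    (f : ∀ i : Fin n, A i.castSucc ⟶ A i.succ)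
    (g : ∀ i : Fin n, B i.castSucc ⟶ B i.succ)
    (φ : ∀ i : Fin (n + 1), A i ⟶ B i)
    (dl : (E.obj (op (B ⟨n, Nat.lt_succ_self n⟩))).obj (A ⟨0, Nat.succ_pos n⟩)) : Prop :=
  dist (coconeCplx n A B f g φ)
    (extCast E (coconeX_zero n A B).symm (coconeX_last n A B).symm dl)

/-- `fm` is an inflation: it occurs as the `0`-th differential of some distinguished
`n`-exangle. -/
def IsInflationFor (n : ℕ) (E : Cᵒᵖ ⥤ C ⥤ AddCommGrpCat.{v})
    (dist : ∀ Z : NExCplx C n, NEext E Z → Prop) {X Y : C} (fm : X ⟶ Y) : Prop :=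
  ∃ (Z : NExCplx C n) (δ : NEext E Z), dist Z δ ∧
    ∃ (h1 : Z.X (fin0 n) = X) (h2 : Z.X (Fin.succ ⟨0, Nat.succ_pos n⟩) = Y),
      Z.d ⟨0, Nat.succ_pos n⟩ = eqToHom h1 ≫ fm ≫ eqToHom h2.symm

/-- `gm` is a deflation: it occurs as the `n`-th differential of some distinguished
`n`-exangle. -/
def IsDeflationFor (n : ℕ) (E : Cᵒᵖ ⥤ C ⥤ AddCommGrpCat.{v})
    (dist : ∀ Z : NExCplx C n, NEext E Z → Prop) {X Y : C} (gm : X ⟶ Y) : Prop :=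
  ∃ (Z : NExCplx C n) (δ : NEext E Z), dist Z δ ∧
    ∃ (h1 : Z.X (Fin.castSucc (Fin.last n)) = X) (h2 : Z.X (finLast n) = Y),
      Z.d (Fin.last n) = eqToHom h1 ≫ gm ≫ eqToHom h2.symm

/-- A pre-`n`-exangulated category structure on the additive category `C`:
an additive bifunctor `E : Cᵒᵖ × C → Ab` together with an exact realization,
recorded by the predicate `Distinguished` singling out the distinguished
`n`-exangles, subject to exactness of the associated Hom-sequences (R1),
existence of realizations, lifting of morphisms of extensions (R0), and
closure of inflations and deflations under composition (EA1). -/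
structure PreNExangulated (C : Type u) [Category.{v} C] [Preadditive C]
    [HasZeroObject C] [HasBinaryBiproducts C] (n : ℕ) where
  E : Cᵒᵖ ⥤ C ⥤ AddCommGrpCat.{v}
  Distinguished : ∀ Z : NExCplx C n, NEext E Z → Prop
  exact_contra_mid : ∀ ⦃Z : NExCplx C n⦄ ⦃δ : NEext E Z⦄, Distinguished Z δ →
    ∀ (W : C) (i : Fin n),
      Function.Exact (fun h : W ⟶ Z.X i.castSucc.castSucc => h ≫ Z.d i.castSucc)
        (fun h : W ⟶ Z.X i.succ.castSucc => h ≫ Z.d i.succ)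
  exact_contra_last : ∀ ⦃Z : NExCplx C n⦄ ⦃δ : NEext E Z⦄, Distinguished Z δ →
    ∀ (W : C),
      Function.Exact (fun h : W ⟶ Z.X (Fin.castSucc (Fin.last n)) => h ≫ Z.d (Fin.last n))
        (fun h : W ⟶ Z.X (finLast n) => pullb E h δ)
  exact_cov_mid : ∀ ⦃Z : NExCplx C n⦄ ⦃δ : NEext E Z⦄, Distinguished Z δ →
    ∀ (W : C) (i : Fin n),
      Function.Exact (fun h : Z.X i.succ.succ ⟶ W => Z.d i.succ ≫ h)
        (fun h : Z.X i.castSucc.succ ⟶ W => Z.d i.castSucc ≫ h)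
  exact_cov_first : ∀ ⦃Z : NExCplx C n⦄ ⦃δ : NEext E Z⦄, Distinguished Z δ →
    ∀ (W : C),
      Function.Exact (fun h : Z.X (Fin.succ ⟨0, Nat.succ_pos n⟩) ⟶ W => Z.d ⟨0, Nat.succ_pos n⟩ ≫ h)
        (fun h : Z.X (fin0 n) ⟶ W => pushf E h δ)
  lift_exists : ∀ ⦃Z W : NExCplx C n⦄ ⦃δ : NEext E Z⦄ ⦃ρ : NEext E W⦄,
    Distinguished Z δ → Distinguished W ρ →
    ∀ (a : Z.X (fin0 n) ⟶ W.X (fin0 n)) (c : Z.X (finLast n) ⟶ W.X (finLast n)),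
      pushf E a δ = pullb E c ρ →
      ∃ φ : ExangleMor E Z W δ ρ, φ.app (fin0 n) = a ∧ φ.app (finLast n) = c
  realize : ∀ (A Xl : C) (δ : (E.obj (op Xl)).obj A),
    ∃ (Z : NExCplx C n) (h0 : Z.X (fin0 n) = A) (hl : Z.X (finLast n) = Xl),
      Distinguished Z (extCast E h0.symm hl.symm δ)
  infl_comp : ∀ {X Y W : C} (f : X ⟶ Y) (g : Y ⟶ W),
    IsInflationFor n E Distinguished f → IsInflationFor n E Distinguished g →
      IsInflationFor n E Distinguished (f ≫ g)
  defl_comp : ∀ {X Y W : C} (f : X ⟶ Y) (g : Y ⟶ W),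
    IsDeflationFor n E Distinguished f → IsDeflationFor n E Distinguished g →
      IsDeflationFor n E Distinguished (f ≫ g)

/-- The axiom (EA2): a morphism of extensions of the form `(id, c)` between
distinguished `n`-exangles admits a good lift, i.e. one whose mapping cone
together with `(d₀^X)_*ρ` is again a distinguished `n`-exangle. -/
noncomputable def EA2For (n : ℕ) (E : Cᵒᵖ ⥤ C ⥤ AddCommGrpCat.{v})
    (dist : ∀ Z : NExCplx C n, NEext E Z → Prop) : Prop :=
  ∀ (Z W : NExCplx C n) (δ : NEext E Z) (ρ : NEext E W),
    dist Z δ → dist W ρ →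
    ∀ (h0 : Z.X (fin0 n) = W.X (fin0 n)) (c : Z.X (finLast n) ⟶ W.X (finLast n)),
      pushf E (eqToHom h0) δ = pullb E c ρ →
      ∃ φ : ExangleMor E Z W δ ρ,
        φ.app (fin0 n) = eqToHom h0 ∧ φ.app (finLast n) = c ∧
        IsHomotopyCartesian n E dist (fun i => Z.X i.succ) (fun i => W.X i.succ)
          (fun i => Z.d i.succ) (fun i => W.d i.succ) (fun i => φ.app i.succ)
          (pushf E (eqToHom h0.symm ≫ Z.d ⟨0, Nat.succ_pos n⟩) ρ)

/-- The condition (EA2-1): given two distinguished `n`-exangles starting at the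
same object and a morphism `φ₁` compatible with the first differentials, it
extends to a morphism of `n`-exangles `(id, φ₁, φ₂, …, φ_{n+1})` whose induced
ladder (in degrees `1, …, n+1`) is homotopy cartesian with differential
`(f₀)_*δ'`. -/
noncomputable def EA21For (n : ℕ) (E : Cᵒᵖ ⥤ C ⥤ AddCommGrpCat.{v})
    (dist : ∀ Z : NExCplx C n, NEext E Z → Prop) : Prop :=
  ∀ (Z W : NExCplx C n) (δ : NEext E Z) (δ' : NEext E W),
    dist Z δ → dist W δ' →
    ∀ (h0 : Z.X (fin0 n) = W.X (fin0 n))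
      (φ1 : Z.X (Fin.succ ⟨0, Nat.succ_pos n⟩) ⟶ W.X (Fin.succ ⟨0, Nat.succ_pos n⟩)),
      Z.d ⟨0, Nat.succ_pos n⟩ ≫ φ1 = eqToHom h0 ≫ W.d ⟨0, Nat.succ_pos n⟩ →
      ∃ φ : ExangleMor E Z W δ δ',
        φ.app (fin0 n) = eqToHom h0 ∧ φ.app (Fin.succ ⟨0, Nat.succ_pos n⟩) = φ1 ∧
        IsHomotopyCartesian n E dist (fun i => Z.X i.succ) (fun i => W.X i.succ)
          (fun i => Z.d i.succ) (fun i => W.d i.succ) (fun i => φ.app i.succ)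
          (pushf E (eqToHom h0.symm ≫ Z.d ⟨0, Nat.succ_pos n⟩) δ')

/-- The axiom (EA2)ᵒᵖ, dual to (EA2), via mapping cocones. -/
noncomputable def EA2opFor (n : ℕ) (E : Cᵒᵖ ⥤ C ⥤ AddCommGrpCat.{v})
    (dist : ∀ Z : NExCplx C n, NEext E Z → Prop) : Prop :=
  ∀ (W Z : NExCplx C n) (ρ : NEext E W) (δ : NEext E Z),
    dist W ρ → dist Z δ →
    ∀ (hl : W.X (finLast n) = Z.X (finLast n)) (a : W.X (fin0 n) ⟶ Z.X (fin0 n)),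
      pushf E a ρ = pullb E (eqToHom hl) δ →
      ∃ φ : ExangleMor E W Z ρ δ,
        φ.app (fin0 n) = a ∧ φ.app (finLast n) = eqToHom hl ∧
        IsCoHomotopyCartesian n E dist (fun i => W.X i.castSucc) (fun i => Z.X i.castSucc)
          (fun i => W.d i.castSucc) (fun i => Z.d i.castSucc) (fun i => φ.app i.castSucc)
          (pullb E (Z.d (Fin.last n) ≫ eqToHom hl.symm) ρ)

/-- An `n`-exangulated category: a pre-`n`-exangulated category satisfying
(EA2) and (EA2)ᵒᵖ. -/
structure NExangulated (C : Type u) [Category.{v} C] [Preadditive C]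
    [HasZeroObject C] [HasBinaryBiproducts C] (n : ℕ)
    extends PreNExangulated C n where
  ea2 : EA2For n E Distinguished
  ea2op : EA2opFor n E Distinguished

section HalfExact

variable {A : Type u₂} [Category.{v₂} A] [Abelian A]

/-- A functor `F : C → 𝒜` to an abelian category is half exact if it sends every
distinguished `n`-exangle `X₀ → ⋯ → X_{n+1}` to an exact sequence
`FX₀ → ⋯ → FX_{n+1}`. -/
def IsHalfExact {n : ℕ} (N : NExangulated C n) (F : C ⥤ A) : Prop :=
  ∀ ⦃Z : NExCplx C n⦄ ⦃δ : NEext N.E Z⦄, N.Distinguished Z δ → ∀ i : Fin n,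
    ∃ w : F.map (Z.d i.castSucc) ≫ F.map (Z.d i.succ) = 0,
      (ShortComplex.mk (F.map (Z.d i.castSucc)) (F.map (Z.d i.succ)) w).Exact

/-- The subset `E^F_R(X_{n+1}, X₀) ⊆ E(X_{n+1}, X₀)` of extensions all of whose
realizing distinguished `n`-exangles have `F`-epimorphic last differential. -/
def EFR {n : ℕ} (N : NExangulated C n) (F : C ⥤ A) (Xl X0 : C) :
    Set ((N.E.obj (op Xl)).obj X0) :=
  {δ | ∀ (Z : NExCplx C n) (h0 : Z.X (fin0 n) = X0) (hl : Z.X (finLast n) = Xl),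
      N.Distinguished Z (extCast N.E h0.symm hl.symm δ) →
        Epi (F.map (Z.d (Fin.last n)))}

end HalfExact

/-- `gm` is a deflation for the relative structure determined by the subfunctor `S`:
it is the last differential of a distinguished `n`-exangle whose extension lies
in `S`. -/
def IsRelDeflation (n : ℕ) (E : Cᵒᵖ ⥤ C ⥤ AddCommGrpCat.{v})
    (dist : ∀ Z : NExCplx C n, NEext E Z → Prop)
    (S : ∀ Xl X0 : C, Set ((E.obj (op Xl)).obj X0)) {X Y : C} (gm : X ⟶ Y) : Prop :=
  ∃ (Z : NExCplx C n) (δ : NEext E Z), dist Z δ ∧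
    δ ∈ S (Z.X (finLast n)) (Z.X (fin0 n)) ∧
    ∃ (h1 : Z.X (Fin.castSucc (Fin.last n)) = X) (h2 : Z.X (finLast n) = Y),
      Z.d (Fin.last n) = eqToHom h1 ≫ gm ≫ eqToHom h2.symm

end NEx

/-!
Whether `F` sends the last differential of a realization of `δ` to an epimorphism does not
depend on the realization, since a morphism of distinguished `n`-exangles that is invertible in
degree `n+1` transports this property; with the lift `(a, 1)` this gives stability under `a_*`.
Realizations of `0` have split last differential. For `c^*δ`, (EA2) gives a lift `(1, …, c)` from
a realization of `c^*δ` to one of `δ` whose mapping cone is distinguished; half exactness of `F`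
at the penultimate term `X'_{n+1} ⊞ X_n` of the cone, whose map to `X_{n+1}` restricts to the
`F`-epimorphism `f_n` on `X_n`, forces `F f'_n` to be epi.
Finally `δ₁ + δ₂ = Δ^* ∇_* (δ₁ ⊕ δ₂)` and `-δ = (-1)^* δ`, where `δ₁ ⊕ δ₂ ∈ E^F_R` because
`F(X ⊞ X')` is generated by the images of `F inl` and `F inr`, and the additivity of `c ↦ c^*δ`
is read off from the exactness of `C(-, X_n) → C(-, X_{n+1}) → E(-, X₀)`.
-/

namespace NEx

section ExtensionCalculus

variable {C : Type u} [Category.{v} C] {E : Cᵒᵖ ⥤ C ⥤ AddCommGrpCat.{v}}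

lemma pushf_pushf {A A' A'' X : C} (a : A ⟶ A') (b : A' ⟶ A'') (δ : (E.obj (op X)).obj A) :
    pushf E b (pushf E a δ) = pushf E (a ≫ b) δ := by
  simp [pushf]

lemma pullb_pullb {A X X' X'' : C} (c : X'' ⟶ X') (c' : X' ⟶ X) (δ : (E.obj (op X)).obj A) :
    pullb E c (pullb E c' δ) = pullb E (c ≫ c') δ := by
  simp [pullb]

@[simp] lemma pushf_id {A X : C} (δ : (E.obj (op X)).obj A) : pushf E (𝟙 A) δ = δ := by
  simp [pushf]

@[simp] lemma pullb_id {A X : C} (δ : (E.obj (op X)).obj A) : pullb E (𝟙 X) δ = δ := by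
  simp [pullb]

lemma pushf_pullb {A A' X X' : C} (a : A ⟶ A') (c : X' ⟶ X) (δ : (E.obj (op X)).obj A) :
    pushf E a (pullb E c δ) = pullb E c (pushf E a δ) :=
  (ConcreteCategory.congr_hom ((E.map c.op).naturality a) δ).symm

lemma pushf_add {A A' X : C} (a : A ⟶ A') (δ δ' : (E.obj (op X)).obj A) :
    pushf E a (δ + δ') = pushf E a δ + pushf E a δ' := by
  simp [pushf]

lemma pullb_add {A X X' : C} (c : X' ⟶ X) (δ δ' : (E.obj (op X)).obj A) :
    pullb E c (δ + δ') = pullb E c δ + pullb E c δ' := by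
  simp [pullb]

lemma pullb_sub {A X X' : C} (c : X' ⟶ X) (δ δ' : (E.obj (op X)).obj A) :
    pullb E c (δ - δ') = pullb E c δ - pullb E c δ' := by
  simp [pullb]

@[simp] lemma extCast_rfl {A X : C} (δ : (E.obj (op X)).obj A) :
    extCast E rfl rfl δ = δ := by
  simp [extCast]

end ExtensionCalculus

section Additivity

variable {C : Type u} [Category.{v} C] [Preadditive C] [HasZeroObject C] [HasBinaryBiproducts C]
  {n : ℕ} (P : PreNExangulated C n)

lemma pullb_zero_left {X0 Xl W : C} (δ : (P.E.obj (op Xl)).obj X0) :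
    pullb P.E (0 : W ⟶ Xl) δ = 0 := by
  obtain ⟨Z, rfl, rfl, hZ⟩ := P.realize X0 Xl δ
  rw [extCast_rfl] at hZ
  exact (P.exact_contra_last hZ W 0).mpr ⟨0, zero_comp⟩

lemma eq_zero_of_pullb_inl_of_pullb_inr {X Y X0 : C} (θ : (P.E.obj (op (X ⊞ Y))).obj X0)
    (hX : pullb P.E biprod.inl θ = 0) (hY : pullb P.E biprod.inr θ = 0) : θ = 0 := by
  obtain ⟨Z, rfl, hl, hZ⟩ := P.realize X0 (X ⊞ Y) θ
  have key {W : C} (c : W ⟶ X ⊞ Y) :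
      pullb P.E c θ = 0 ↔ ∃ h, h ≫ Z.d (Fin.last n) = c ≫ eqToHom hl.symm := by
    refine .trans ?_ ((P.exact_contra_last hZ W (c ≫ eqToHom hl.symm)).trans Set.mem_range)
    simp only [extCast, pullb_pullb, Category.assoc, eqToHom_trans, eqToHom_refl,
      Category.comp_id, pushf_id]
  obtain ⟨x, hx⟩ := (key _).mp hX
  obtain ⟨y, hy⟩ := (key _).mp hY
  rw [← pullb_id (E := P.E) θ, key]
  refine ⟨biprod.fst ≫ x + biprod.snd ≫ y, ?_⟩
  rw [Preadditive.add_comp, Category.assoc, Category.assoc, hx, hy, ← Category.assoc,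
    ← Category.assoc, ← Preadditive.add_comp, biprod.total]

lemma pullb_add_left {X0 Xl W : C} (c c' : W ⟶ Xl) (δ : (P.E.obj (op Xl)).obj X0) :
    pullb P.E (c + c') δ = pullb P.E c δ + pullb P.E c' δ := by
  have hdiag : pullb P.E (biprod.desc (𝟙 Xl) (𝟙 Xl)) δ
      = pullb P.E biprod.fst δ + pullb P.E biprod.snd δ := by
    rw [← sub_eq_zero]
    apply eq_zero_of_pullb_inl_of_pullb_inr P <;>
      simp [pullb_sub, pullb_add, pullb_pullb, pullb_zero_left P]
  have hsum : c + c' = biprod.lift c c' ≫ biprod.desc (𝟙 Xl) (𝟙 Xl) := by simp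
  rw [hsum, ← pullb_pullb, hdiag, pullb_add, pullb_pullb, pullb_pullb]
  simp

lemma pullb_neg_id {X0 Xl : C} (δ : (P.E.obj (op Xl)).obj X0) :
    pullb P.E (-𝟙 Xl) δ = -δ := by
  have h := pullb_add_left P (-𝟙 Xl) (𝟙 Xl) δ
  rw [neg_add_cancel, pullb_zero_left P, pullb_id] at h
  exact eq_neg_of_add_eq_zero_left h.symm

end Additivity

section Abelian

variable {𝒜 : Type u₂} [Category.{v₂} 𝒜] [Abelian 𝒜]

/-- Diagram chase up to refinements: correct `x ≫ i₁` by an element of `Y` so that it dies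
under `S.g`, then lift it along `S.f`. -/
lemma _root_.CategoryTheory.ShortComplex.Exact.epi_f_comp_of_retraction {S : ShortComplex 𝒜}
    (hS : S.Exact) {X Y : 𝒜} {i₁ : X ⟶ S.X₂} {i₂ : Y ⟶ S.X₂} {p : S.X₂ ⟶ X}
    (h₁ : i₁ ≫ p = 𝟙 X) (h₂ : i₂ ≫ p = 0) (hg : Epi (i₂ ≫ S.g)) : Epi (S.f ≫ p) := by
  rw [epi_iff_surjective_up_to_refinements]
  intro T x
  obtain ⟨T₁, π₁, _, y, hy⟩ := surjective_up_to_refinements_of_epi (i₂ ≫ S.g) (x ≫ i₁ ≫ S.g)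
  obtain ⟨T₂, π₂, _, x₁, hx₁⟩ := hS.exact_up_to_refinements (π₁ ≫ x ≫ i₁ - y ≫ i₂)
    (by simp only [Preadditive.sub_comp, Category.assoc, hy, sub_self])
  refine ⟨T₂, π₂ ≫ π₁, epi_comp _ _, x₁, ?_⟩
  have := hx₁ =≫ p
  simp only [Preadditive.comp_sub, Preadditive.sub_comp, Category.assoc, h₁, h₂, comp_zero,
    sub_zero, Category.comp_id] at this
  simpa only [Category.assoc] using this

end Abelian

section MappingCone

variable {C : Type u} [Category.{v} C] [Preadditive C] [HasBinaryBiproducts C] {m : ℕ}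
  {A B : Fin (m + 2) → C} (f : ∀ i : Fin (m + 1), A i.castSucc ⟶ A i.succ)
  (g : ∀ i : Fin (m + 1), B i.castSucc ⟶ B i.succ) (φ : ∀ i : Fin (m + 2), A i ⟶ B i)

lemma coneX_castSucc_last : coneX (m + 1) A B (Fin.last (m + 1)).castSucc =
    (A (Fin.last (m + 1)) ⊞ B (Fin.last m).castSucc) :=
  coneX_mid (m + 1) A B _ (by simp) (by simp)

lemma coneD_last : coneD (m + 1) A B f g φ (Fin.last (m + 1)) =
    eqToHom coneX_castSucc_last ≫ biprod.desc (φ (Fin.last (m + 1))) (g (Fin.last m)) ≫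
      eqToHom (coneX_last (m + 1) A B).symm := by
  rw [coneD, dif_neg (by simp), dif_neg (by simp)]
  -- the transport after `g` in `coneD` is between definitionally equal objects
  erw [eqToHom_refl, Category.comp_id]
  rfl

lemma exists_coneD_castSucc_last_comp_fst : ∃ w, coneD (m + 1) A B f g φ (Fin.last m).castSucc ≫
    eqToHom coneX_castSucc_last ≫ biprod.fst = w ≫ (-f (Fin.last m)) := by
  rcases Nat.eq_zero_or_pos m with rfl | hm
  · refine ⟨eqToHom (coneX_zero 1 A B), ?_⟩
    rw [coneD, dif_pos (by simp), dif_neg (by omega)]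
    simp
  · refine ⟨eqToHom (coneX_mid (m + 1) A B (Fin.last m).castSucc.castSucc (by simp; omega)
      (by simp)) ≫ biprod.fst, ?_⟩
    rw [coneD, dif_neg (by simp; omega), dif_pos (by simp)]
    simp only [Category.assoc, eqToHom_trans_assoc]
    erw [eqToHom_refl (A (Fin.last (m + 1)) ⊞ B (Fin.last m).castSucc), Category.id_comp,
      biprod.lift_fst]
    congr 1
    exact biprod.hom_ext' _ _ (by simp [Fin.last]) (by simp)

end MappingCone

section HomotopyCartesian

variable {C : Type u} [Category.{v} C] [Preadditive C] [HasZeroObject C] [HasBinaryBiproducts C]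
  {𝒜 : Type u₂} [Category.{v₂} 𝒜] [Abelian 𝒜]

lemma epi_map_of_isHomotopyCartesian {m : ℕ} {N : NExangulated C (m + 1)} {F : C ⥤ 𝒜}
    [F.Additive] (hF : IsHalfExact N F) {A B : Fin (m + 2) → C}
    {f : ∀ i : Fin (m + 1), A i.castSucc ⟶ A i.succ}
    {g : ∀ i : Fin (m + 1), B i.castSucc ⟶ B i.succ}
    {φ : ∀ i : Fin (m + 2), A i ⟶ B i} {dl : (N.E.obj (op (B (Fin.last (m + 1))))).obj (A 0)}
    (h : IsHomotopyCartesian (m + 1) N.E N.Distinguished A B f g φ dl)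
    (hg : Epi (F.map (g (Fin.last m)))) : Epi (F.map (f (Fin.last m))) := by
  obtain ⟨_, hexact⟩ := hF h (Fin.last m)
  have hq : coneX (m + 1) A B (Fin.last (m + 1)).castSucc = _ := coneX_castSucc_last
  have hepi : Epi (F.map (biprod.inr ≫ eqToHom hq.symm) ≫
      F.map (coneD (m + 1) A B f g φ (Fin.last (m + 1)))) := by
    rw [← F.map_comp, coneD_last]
    simp only [Category.assoc, eqToHom_trans_assoc, eqToHom_refl, Category.id_comp,
      biprod.inr_desc_assoc, F.map_comp]
    exact epi_comp _ _
  have hinl_fst : (biprod.inl ≫ eqToHom hq.symm) ≫ eqToHom hq ≫ biprod.fst = 𝟙 _ := by simp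
  have hinr_fst : (biprod.inr ≫ eqToHom hq.symm) ≫ eqToHom hq ≫ biprod.fst = 0 := by simp
  have hf := hexact.epi_f_comp_of_retraction (i₁ := F.map (biprod.inl ≫ eqToHom hq.symm))
    (i₂ := F.map (biprod.inr ≫ eqToHom hq.symm)) (p := F.map (eqToHom hq ≫ biprod.fst))
    (by rw [← F.map_comp]; exact (congrArg F.map hinl_fst).trans (F.map_id _))
    (by rw [← F.map_comp]; exact (congrArg F.map hinr_fst).trans (F.map_zero _ _)) hepi
  obtain ⟨w, hw⟩ := exists_coneD_castSucc_last_comp_fst f g φ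
  dsimp only [coneCplx] at hf
  rw [← F.map_comp, hw, F.map_comp, F.map_neg] at hf
  have : Epi (-F.map (f (Fin.last m))) := epi_of_epi (F.map w) _
  rw [← neg_neg (F.map (f (Fin.last m)))]
  infer_instance

end HomotopyCartesian

section Extensions

variable {C : Type u} [Category.{v} C] [HasZeroMorphisms C] [HasBinaryBiproducts C]
  (E : Cᵒᵖ ⥤ C ⥤ AddCommGrpCat.{v})

noncomputable def extBiprod {A A' X X' : C} (δ₁ : (E.obj (op X)).obj A)
    (δ₂ : (E.obj (op X')).obj A') : (E.obj (op (X ⊞ X'))).obj (A ⊞ A') :=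
  pushf E biprod.inl (pullb E biprod.fst δ₁) + pushf E biprod.inr (pullb E biprod.snd δ₂)

lemma pullb_lift_pushf_desc_extBiprod {A X : C} (δ₁ δ₂ : (E.obj (op X)).obj A) :
    pullb E (biprod.lift (𝟙 X) (𝟙 X)) (pushf E (biprod.desc (𝟙 A) (𝟙 A)) (extBiprod E δ₁ δ₂)) =
      δ₁ + δ₂ := by
  simp [extBiprod, pushf_add, pullb_add, pushf_pushf, pullb_pullb]

end Extensions

lemma eq_zero_of_map_inl_comp_of_map_inr_comp {C : Type u} [Category.{v} C] [Preadditive C]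
    [HasBinaryBiproducts C] {𝒜 : Type u₂} [Category.{v₂} 𝒜] [Preadditive 𝒜] (F : C ⥤ 𝒜)
    [F.Additive] {X Y : C} {T : 𝒜} {s : F.obj (X ⊞ Y) ⟶ T} (hX : F.map biprod.inl ≫ s = 0) (hY : F.map biprod.inr ≫ s = 0) :
    s = 0 := by
  rw [← Category.id_comp s, ← F.map_id, ← biprod.total, F.map_add, Preadditive.add_comp,
    F.map_comp, F.map_comp, Category.assoc, Category.assoc, hX, hY, comp_zero, comp_zero,
    add_zero]

lemma ExangleMor.map_app_last_comp_eq_zero {C : Type u} [Category.{v} C] {𝒜 : Type u₂} [Category.{v₂} 𝒜]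
    [HasZeroMorphisms 𝒜] {n : ℕ} (F : C ⥤ 𝒜) {E : Cᵒᵖ ⥤ C ⥤ AddCommGrpCat.{v}}
    {Z W : NExCplx C n} {δ : NEext E Z} {ρ : NEext E W} (φ : ExangleMor E Z W δ ρ)
    [Epi (F.map (Z.d (Fin.last n)))] {T : 𝒜} {t : F.obj (W.X (finLast n)) ⟶ T}
    (ht : F.map (W.d (Fin.last n)) ≫ t = 0) : F.map (φ.app (finLast n)) ≫ t = 0 := by
  have hsq : Z.d (Fin.last n) ≫ φ.app (finLast n) = φ.app _ ≫ W.d (Fin.last n) :=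
    φ.comm (Fin.last n)
  rw [← cancel_epi (F.map (Z.d (Fin.last n))), comp_zero, ← F.map_comp_assoc, hsq,
    F.map_comp_assoc, ht, comp_zero]

section EFR

variable {C : Type u} [Category.{v} C] [Preadditive C] [HasZeroObject C] [HasBinaryBiproducts C]
  {𝒜 : Type u₂} [Category.{v₂} 𝒜] {n : ℕ} (F : C ⥤ 𝒜)

lemma epi_map_last_of_pushf_eq_pullb (P : PreNExangulated C n) {Z W : NExCplx C n}
    {δ : NEext P.E Z} {ρ : NEext P.E W} (hZ : P.Distinguished Z δ) (hW : P.Distinguished W ρ)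
    (a : Z.X (fin0 n) ⟶ W.X (fin0 n)) (c : Z.X (finLast n) ⟶ W.X (finLast n)) [IsIso c]
    (h : pushf P.E a δ = pullb P.E c ρ) [Epi (F.map (Z.d (Fin.last n)))] :
    Epi (F.map (W.d (Fin.last n))) := by
  obtain ⟨φ, -, hφ⟩ := P.lift_exists hZ hW a c h
  have hsq : F.map (Z.d (Fin.last n)) ≫ F.map c =
      F.map (φ.app (Fin.last n).castSucc) ≫ F.map (W.d (Fin.last n)) := by
    rw [← hφ, ← F.map_comp, ← F.map_comp]
    exact congrArg F.map (φ.comm (Fin.last n))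
  have : Epi (F.map (φ.app (Fin.last n).castSucc) ≫ F.map (W.d (Fin.last n))) := by
    rw [← hsq]
    exact epi_comp _ _
  exact epi_of_epi (F.map (φ.app (Fin.last n).castSucc)) _

variable (N : NExangulated C n)

lemma zero_mem_EFR (Xl X0 : C) : 0 ∈ EFR N F Xl X0 := by
  intro Z h0 hl hZ
  subst h0 hl
  rw [extCast_rfl] at hZ
  obtain ⟨s, hs⟩ := (N.exact_contra_last hZ _ (𝟙 _)).mp (pullb_id _)
  exact (SplitEpi.mk (F.map s) (by rw [← F.map_comp, show s ≫ _ = _ from hs, F.map_id])).epi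

lemma pushf_mem_EFR {Xl X0 X0' : C} (a : X0 ⟶ X0') {δ : (N.E.obj (op Xl)).obj X0}
    (hδ : δ ∈ EFR N F Xl X0) : pushf N.E a δ ∈ EFR N F Xl X0' := by
  intro W rfl rfl hW
  obtain ⟨Z, rfl, hl, hZ⟩ := N.realize X0 _ δ
  have := hδ Z rfl hl hZ
  rw [extCast_rfl] at hW
  exact epi_map_last_of_pushf_eq_pullb F N.toPreNExangulated hZ hW a (eqToHom hl)
    (by rw [extCast, pushf_pullb, eqToHom_refl, pushf_id])

lemma extBiprod_mem_EFR [Preadditive 𝒜] [F.Additive] {Xl₁ Xl₂ X0₁ X0₂ : C}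
    {δ₁ : (N.E.obj (op Xl₁)).obj X0₁} {δ₂ : (N.E.obj (op Xl₂)).obj X0₂}
    (h₁ : δ₁ ∈ EFR N F Xl₁ X0₁) (h₂ : δ₂ ∈ EFR N F Xl₂ X0₂) :
    extBiprod N.E δ₁ δ₂ ∈ EFR N F (Xl₁ ⊞ Xl₂) (X0₁ ⊞ X0₂) := by
  intro W h0 hl hW
  obtain ⟨Z₁, rfl, rfl, hZ₁⟩ := N.realize X0₁ Xl₁ δ₁
  obtain ⟨Z₂, rfl, rfl, hZ₂⟩ := N.realize X0₂ Xl₂ δ₂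
  have := h₁ Z₁ rfl rfl hZ₁
  have := h₂ Z₂ rfl rfl hZ₂
  rw [extCast_rfl] at hZ₁ hZ₂
  obtain ⟨φ₁, -, hφ₁⟩ := N.lift_exists hZ₁ hW (biprod.inl ≫ eqToHom h0.symm)
    (biprod.inl ≫ eqToHom hl.symm) (by
      simp only [extBiprod, extCast, pushf_add, pullb_add, pushf_pushf, pushf_pullb, pullb_pullb,
        Category.assoc, eqToHom_trans_assoc, eqToHom_refl, Category.id_comp, biprod.inl_fst,
        biprod.inl_snd, pullb_id, pullb_zero_left N.toPreNExangulated, add_zero])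
  obtain ⟨φ₂, -, hφ₂⟩ := N.lift_exists hZ₂ hW (biprod.inr ≫ eqToHom h0.symm)
    (biprod.inr ≫ eqToHom hl.symm) (by
      simp only [extBiprod, extCast, pushf_add, pullb_add, pushf_pushf, pushf_pullb, pullb_pullb,
        Category.assoc, eqToHom_trans_assoc, eqToHom_refl, Category.id_comp, biprod.inr_fst,
        biprod.inr_snd, pullb_id, pullb_zero_left N.toPreNExangulated, zero_add])
  refine (Preadditive.epi_iff_cancel_zero _).mpr fun T t ht => ?_
  have k₁ := φ₁.map_app_last_comp_eq_zero F ht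
  have k₂ := φ₂.map_app_last_comp_eq_zero F ht
  rw [hφ₁, F.map_comp, Category.assoc] at k₁
  rw [hφ₂, F.map_comp, Category.assoc] at k₂
  have := eq_zero_of_map_inl_comp_of_map_inr_comp F k₁ k₂
  simpa using F.map (eqToHom hl) ≫= this

lemma pullb_mem_EFR [Abelian 𝒜] [F.Additive] (hn : 0 < n) (hF : IsHalfExact N F)
    {Xl Xl' X0 : C} (c : Xl' ⟶ Xl) {δ : (N.E.obj (op Xl)).obj X0} (hδ : δ ∈ EFR N F Xl X0) :
    pullb N.E c δ ∈ EFR N F Xl' X0 := by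
  obtain ⟨m, rfl⟩ : ∃ m, n = m + 1 := ⟨n - 1, by omega⟩
  intro W rfl rfl hW
  obtain ⟨Z, h0, hl, hZ⟩ := N.realize _ Xl δ
  rw [extCast_rfl] at hW
  obtain ⟨φ, -, -, hcone⟩ := N.ea2 W Z _ _ hW hZ h0.symm (c ≫ eqToHom hl.symm) (by
    simp only [extCast, pushf_pullb, pullb_pullb, Category.assoc, eqToHom_trans, eqToHom_refl,
      Category.comp_id])
  exact epi_map_of_isHomotopyCartesian hF hcone (hδ Z h0 hl hZ)

end EFR

variable {C : Type u} [Category.{v} C] [Preadditive C] [HasBinaryBiproducts C] [HasZeroObject C]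

/-- **Theorem 4.5(1), first part.** For a half exact functor `F : C → 𝒜` from an
`n`-exangulated category to an abelian category, `E^F_R` is an additive
subfunctor of `E`: each `E^F_R(X_{n+1}, X₀)` is a subgroup of `E(X_{n+1}, X₀)`,
and `E^F_R` is stable under pushforward `a_*` and pullback `c^*`. -/
theorem EFR_additive_subfunctor {A' : Type u₂} [Category.{v₂} A'] [Abelian A']
    (n : ℕ) (hn : 0 < n) (N : NExangulated C n) (F : C ⥤ A') [F.Additive]
    (hF : IsHalfExact N F) :
    (∀ Xl X0 : C, ∃ G : AddSubgroup ((N.E.obj (op Xl)).obj X0),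
      (G : Set ((N.E.obj (op Xl)).obj X0)) = EFR N F Xl X0) ∧
    (∀ (Xl X0 X0' : C) (a : X0 ⟶ X0') (δ : (N.E.obj (op Xl)).obj X0),
      δ ∈ EFR N F Xl X0 → pushf N.E a δ ∈ EFR N F Xl X0') ∧
    (∀ (Xl' Xl X0 : C) (c : Xl' ⟶ Xl) (δ : (N.E.obj (op Xl)).obj X0),
      δ ∈ EFR N F Xl X0 → pullb N.E c δ ∈ EFR N F Xl' X0) := by
  refine ⟨fun Xl X0 => ⟨{ carrier := EFR N F Xl X0
                          zero_mem' := zero_mem_EFR F N Xl X0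
                          add_mem' := fun h₁ h₂ => ?_
                          neg_mem' := fun h => ?_ }, rfl⟩,
    fun _ _ _ a _ => pushf_mem_EFR F N a, fun _ _ _ c _ => pullb_mem_EFR F N hn hF c⟩
  · rw [← pullb_lift_pushf_desc_extBiprod]
    exact pullb_mem_EFR F N hn hF _ (pushf_mem_EFR F N _ (extBiprod_mem_EFR F N h₁ h₂))
  · rw [← pullb_neg_id N.toPreNExangulated]
    exact pullb_mem_EFR F N hn hF _ h

end NEx
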